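/- Let n ≥ 2, H = {w ∈ ℂ^n : 2 Re w_n < 1}, 0* = (0,…,0,1), g(w) = |w|^{−2n+2} − |w − 0*|^{−2n+2} for w ∈ H ∖ {0}, and define g_0(w) = g(w) + (1/(n−1)) Σ_{i=1}^n w_i ∂g/∂w_i (w). Then g_0 extends to the function w ↦ |w − 0*|^{−2n} (−|0*|² + Σ_{i=1}^n 0*_i w̄_i) on all of H; in particular the singularity of g at 0 cancels and g_0 is real-analytic (indeed harmonic) on H. -/

import Mathlib

open scoped ComplexConjugate InnerProductSpace

/-!
For an integer `k`, `x ↦ |x - a|^{2k}` is real-valued with gradient `2k |x - a|^{2k-2} (x - a)`,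
so its Wirtinger derivatives are `k |x - a|^{2k-2} (x̄_j - ā_j)` and
`Σ_j w_j ∂_j |w - a|^{2k} = k |w - a|^{2k-2} ⟪w - a, w⟫`. For `a = 0` this is Euler's
identity `k |w|^{2k}`, so with `k = 1 - n` the operator `1 + (1/(n-1)) Σ_j w_j ∂_j` kills
the pole term of `g`. For the reflected term, `⟪w - a, w⟫ = |w - a|² + ⟪w - a, a⟫` leaves
`|w - a|^{2k-2} ⟪w - a, a⟫`, and `⟪w - 0*, 0*⟫ = w̄_n - 1`.
-/

/-- The Wirtinger derivative `∂f/∂w_j = (1/2)(∂f/∂x_j - i ∂f/∂y_j)`. -/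
noncomputable def wirt {n : ℕ} (j : Fin n) (f : EuclideanSpace ℂ (Fin n) → ℂ)
    (p : EuclideanSpace ℂ (Fin n)) : ℂ :=
  (1 / 2) * (fderiv ℝ f p (EuclideanSpace.single j 1)
    - Complex.I * fderiv ℝ f p (EuclideanSpace.single j Complex.I))

theorem hasFDerivAt_zpow_norm_sub_sq {E : Type*} [NormedAddCommGroup E] [InnerProductSpace ℝ E]
    (k : ℤ) {a w : E} (h : w ≠ a) :
    HasFDerivAt (fun x => (‖x - a‖ ^ 2) ^ k)
      (innerSL ℝ ((2 * k * (‖w - a‖ ^ 2) ^ (k - 1)) • (w - a))) w := by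
  have hsq : ‖w - a‖ ^ 2 ≠ 0 := by positivity [sub_ne_zero.mpr h]
  refine ((hasDerivAt_zpow k _ (Or.inl hsq)).comp_hasFDerivAt w
    ((hasFDerivAt_id w).sub_const a).norm_sq).congr_fderiv ?_
  ext v
  simp only [map_sub, map_smul, ContinuousLinearMap.comp_id, smul_apply,
    sub_apply, coe_innerSL_apply, id_eq, nsmul_eq_mul, smul_eq_mul]
  ring

theorem EuclideanSpace.real_inner_single_right {ι : Type*} [Fintype ι] [DecidableEq ι]
    (u : EuclideanSpace ℂ ι) (i : ι) (z : ℂ) :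
    ⟪u, EuclideanSpace.single i z⟫_ℝ = (z * conj (u i)).re := by
  simp [PiLp.inner_apply, Complex.inner, apply_ite Complex.re]

section Wirtinger

variable {n : ℕ} {f : EuclideanSpace ℂ (Fin n) → ℝ} {u w : EuclideanSpace ℂ (Fin n)}

theorem wirt_ofReal_of_hasFDerivAt (hf : HasFDerivAt f (innerSL ℝ u) w) (j : Fin n) :
    wirt j (fun x => (f x : ℂ)) w = conj (u j) / 2 := by
  have hc : HasFDerivAt (fun x => (f x : ℂ)) (Complex.ofRealCLM.comp (innerSL ℝ u)) w :=
    Complex.ofRealCLM.hasFDerivAt.comp w hf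
  have h1 : fderiv ℝ (fun x => (f x : ℂ)) w (EuclideanSpace.single j 1) = (u j).re := by
    simp [hc.fderiv, EuclideanSpace.real_inner_single_right]
  have hI : fderiv ℝ (fun x => (f x : ℂ)) w (EuclideanSpace.single j Complex.I) = (u j).im := by
    simp [hc.fderiv, EuclideanSpace.real_inner_single_right]
  rw [wirt, h1, hI]
  apply Complex.ext <;> simp <;> ring

theorem sum_mul_wirt_ofReal_of_hasFDerivAt (hf : HasFDerivAt f (innerSL ℝ u) w) :
    ∑ i, w i * wirt i (fun x => (f x : ℂ)) w = ⟪u, w⟫_ℂ / 2 := by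
  simp only [wirt_ofReal_of_hasFDerivAt hf, PiLp.inner_apply, RCLike.inner_apply, Finset.sum_div]
  exact Finset.sum_congr rfl fun i _ => by ring

end Wirtinger

theorem zpow_norm_sq_sub_sub_inv_mul_sum_mul_wirt {n : ℕ} {k : ℤ} (hk : k ≠ 0)
    {a w : EuclideanSpace ℂ (Fin n)} (h0 : w ≠ 0) (ha : w ≠ a) :
    (((‖w‖ ^ 2) ^ k - (‖w - a‖ ^ 2) ^ k : ℝ) : ℂ)
      - (k : ℂ)⁻¹ *
        ∑ i, w i * wirt i (fun x => (((‖x‖ ^ 2) ^ k - (‖x - a‖ ^ 2) ^ k : ℝ) : ℂ)) w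
      = (((‖w - a‖ ^ 2) ^ (k - 1) : ℝ) : ℂ) * ⟪w - a, a⟫_ℂ := by
  have hd := (hasFDerivAt_zpow_norm_sub_sq k (a := 0) h0).fun_sub
    (hasFDerivAt_zpow_norm_sub_sq k ha)
  simp only [sub_zero, ← map_sub] at hd
  rw [sum_mul_wirt_ofReal_of_hasFDerivAt hd]
  have hA : ‖w‖ ^ 2 ≠ 0 := by positivity
  have hB : ‖w - a‖ ^ 2 ≠ 0 := by positivity [sub_ne_zero.mpr ha]
  have hw : ⟪w - a, w⟫_ℂ = ⟪w - a, w - a⟫_ℂ + ⟪w - a, a⟫_ℂ := by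
    rw [← inner_add_right, sub_add_cancel]
  simp only [inner_sub_left, RCLike.real_smul_eq_coe_smul (K := ℂ), inner_smul_real_left, hw,
    inner_self_eq_norm_sq_to_K]
  have hAk : (‖w‖ ^ 2) ^ k = (‖w‖ ^ 2) ^ (k - 1) * ‖w‖ ^ 2 := by
    rw [← zpow_add_one₀ hA, sub_add_cancel]
  have hBk : (‖w - a‖ ^ 2) ^ k = (‖w - a‖ ^ 2) ^ (k - 1) * ‖w - a‖ ^ 2 := by
    rw [← zpow_add_one₀ hB, sub_add_cancel]
  rw [hAk, hBk]
  simp only [smul_eq_mul, RCLike.ofReal_eq_complex_ofReal]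
  push_cast
  field_simp
  ring

theorem Complex.ofReal_zpow_two_mul (r : ℝ) (k : ℤ) :
    (r : ℂ) ^ (2 * k) = ((r ^ 2) ^ k : ℝ) := by
  rw [zpow_mul]
  norm_cast

/-- For the Green function `g(w) = |w|^{-2n+2} - |w-0*|^{-2n+2}` of the
half-space `H = {2 Re w_n < 1}` with pole at `0`, the combination
`g₀(w) = g(w) + (1/(n-1)) Σ_i w_i ∂g/∂w_i` has no singularity at `0`:
on `H \ {0}` it coincides with `w ↦ |w - 0*|^{-2n} (-|0*|² + Σ_i 0*_i w̄_i)
= |w - 0*|^{-2n} (w̄_n - 1)`, which is (real-analytic, indeed harmonic) on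
all of `H`. -/
theorem stmt_13 (n : ℕ) (hn : 2 ≤ n) :
    letI en : Fin n := ⟨n - 1, by omega⟩
    letI estar : EuclideanSpace ℂ (Fin n) := EuclideanSpace.single en (1 : ℂ)
    letI g : EuclideanSpace ℂ (Fin n) → ℂ :=
      fun w => ((‖w‖ : ℝ) : ℂ) ^ (-(2 * (n : ℤ)) + 2)
        - ((‖w - estar‖ : ℝ) : ℂ) ^ (-(2 * (n : ℤ)) + 2)
    ∀ w : EuclideanSpace ℂ (Fin n), 2 * (w en).re < 1 → w ≠ 0 →
      g w + (1 / ((n : ℂ) - 1)) * ∑ i, w i * wirt i g w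
        = ((‖w - estar‖ : ℝ) : ℂ) ^ (-(2 * (n : ℤ))) * (conj (w en) - 1) := by
  intro w hw hw0
  set en : Fin n := ⟨n - 1, by omega⟩
  set e : EuclideanSpace ℂ (Fin n) := EuclideanSpace.single en 1
  have hwe : w ≠ e := by
    rintro rfl
    norm_num [e] at hw
  have hk : (1 - n : ℤ) ≠ 0 := by omega
  have hcoef : 1 / ((n : ℂ) - 1) = -((1 - n : ℤ) : ℂ)⁻¹ := by
    push_cast
    rw [← inv_neg, neg_sub, one_div]
  rw [show -(2 * (n : ℤ)) + 2 = 2 * (1 - n) by ring,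
    show -(2 * (n : ℤ)) = 2 * (1 - n - 1) by ring]
  simp only [Complex.ofReal_zpow_two_mul, ← Complex.ofReal_sub]
  rw [hcoef, neg_mul, ← sub_eq_add_neg, zpow_norm_sq_sub_sub_inv_mul_sum_mul_wirt hk hw0 hwe,
    EuclideanSpace.inner_single_right]
  simp [e, en]
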